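/- arXiv:0709.4678 — 4 statements merged into one kernel-verified Lean document; each statement's English description precedes it below -/
import Mathlib

section
/- Let n ≥ 2, let T be an n×n Markov matrix, and let M be a random n×n matrix distributed as U(M_n) (rows i.i.d. uniform on the simplex Λ_n). Then the matrix product T·M has the same law as M if and only if T is a permutation matrix. -/
open MeasureTheory ProbabilityTheory

noncomputable section

/-- The standard simplex `Λ_n ⊆ ℝ^n` (Euclidean space). -/
def simplexSet (n : ℕ) : Set (EuclideanSpace ℝ (Fin n)) :=
  {x | (∀ i, 0 ≤ x i) ∧ ∑ i, x i = 1}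

/-- The uniform distribution on `Λ_n`: normalized `(n-1)`-dimensional Hausdorff measure. -/
def simplexUniformE (n : ℕ) : Measure (EuclideanSpace ℝ (Fin n)) :=
  (μH[(n : ℝ) - 1] (simplexSet n))⁻¹ • (μH[(n : ℝ) - 1]).restrict (simplexSet n)

/-- The uniform distribution on `Λ_n`, transported to the plain function space `Fin n → ℝ`. -/
def simplexUniform (n : ℕ) : Measure (Fin n → ℝ) :=
  (simplexUniformE n).map (MeasurableEquiv.toLp 2 (Fin n → ℝ)).symm

/-- `U(M_n)`: the law of a random `n × n` matrix (rows first) with i.i.d. rows uniform on `Λ_n`. -/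
def markovUniform (n : ℕ) : Measure (Fin n → Fin n → ℝ) :=
  Measure.pi fun _ : Fin n => simplexUniform n

/-- A matrix (rows first) is Markov: non-negative entries and each row sums to `1`. -/
def IsMarkovMatrix {n : ℕ} (T : Fin n → Fin n → ℝ) : Prop :=
  (∀ i j, 0 ≤ T i j) ∧ ∀ i, ∑ j, T i j = 1

/-- A permutation matrix: a 0–1 matrix with exactly one `1` in each row and each column. -/
def IsPermutationMatrix {n : ℕ} (T : Fin n → Fin n → ℝ) : Prop :=
  ∃ σ : Equiv.Perm (Fin n), ∀ i j, T i j = if σ i = j then 1 else 0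

/-!
Fix a column `j` on which the uniform law `ν` of a row has positive variance `v` (some coordinate
must, since `ν` has no atoms). If `T·M ~ M`, the entry `(T·M) i j = ∑ k, T i k * M k j` is a
combination of the independent entries `M k j`, so `v = (∑ k, T i k ^ 2) * v`. Thus
`∑ k, T i k ^ 2 = 1 = ∑ k, T i k`, which forces row `i` of `T` to be a unit vector `e (f i)`.
If `f a = f b` for `a ≠ b`, rows `a` and `b` of `T·M` always coincide, while two independent
rows of `M` coincide with probability `0`; so `f` is a permutation. Conversely, permuting i.i.d.
rows does not change their joint law.
-/

section Variance

variable {Ω : Type*} [MeasurableSpace Ω] {μ : Measure Ω}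

lemma variance_sum_mul_of_pairwise_indepFun {κ : Type*} [Fintype κ] {X : κ → Ω → ℝ}
    (hX : ∀ k, MemLp (X k) 2 μ) (hind : Pairwise fun k l => X k ⟂ᵢ[μ] X l) (t : κ → ℝ) :
    Var[fun ω => ∑ k, t k * X k ω; μ] = ∑ k, t k ^ 2 * Var[X k; μ] := by
  have hsum : (fun ω => ∑ k, t k * X k ω) = ∑ k, t k • X k := by
    ext ω; simp
  rw [hsum, IndepFun.variance_sum (fun k _ => (hX k).const_smul (t k))]
  · simp only [variance_smul]
  · exact fun k _ l _ hkl =>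
      (hind hkl).comp (measurable_const_smul (t k)) (measurable_const_smul (t l))

lemma exists_variance_eval_pos {ι : Type*} [Fintype ι] (ν : Measure (ι → ℝ))
    [IsProbabilityMeasure ν] [NullSingletonClass ν] (hL2 : ∀ j, MemLp (fun x => x j) 2 ν) :
    ∃ j, 0 < Var[fun x => x j; ν] := by
  by_contra! hvar
  have hconst : ∀ᵐ x ∂ν, x = fun j => ν[fun x => x j] := by
    have hcoord : ∀ j, ∀ᵐ x ∂ν, x j = ν[fun x => x j] := fun j =>
      ae_eq_integral_of_variance_eq_zero (hL2 j) ((hvar j).antisymm (variance_nonneg _ _))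
    filter_upwards [ae_all_iff.mpr hcoord] with x hx using funext hx
  obtain ⟨x, hx, hne⟩ := (hconst.and (Measure.ae_ne ν _)).exists
  exact hne hx

end Variance

lemma exists_eq_single_of_mem_stdSimplex_of_sum_sq_eq_one {ι : Type*} [Fintype ι]
    [DecidableEq ι] {t : ι → ℝ} (ht : t ∈ stdSimplex ℝ ι) (hsq : ∑ i, t i ^ 2 = 1) :
    ∃ k, t = Pi.single k 1 := by
  have hzero : ∀ i, t i * (1 - t i) = 0 := by
    have hsum : ∑ i, t i * (1 - t i) = 0 := by
      simp only [mul_sub, mul_one, Finset.sum_sub_distrib, ht.2, ← sq, hsq, sub_self]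
    have hnonneg : ∀ i ∈ Finset.univ, 0 ≤ t i * (1 - t i) := fun i _ =>
      mul_nonneg (ht.1 i) (sub_nonneg.mpr (mem_Icc_of_mem_stdSimplex ht i).2)
    exact fun i => (Finset.sum_eq_zero_iff_of_nonneg hnonneg).mp hsum i (Finset.mem_univ i)
  obtain ⟨k, hk⟩ : ∃ k, t k = 1 := by
    by_contra! h
    have hvanish : ∀ i, t i = 0 := fun i =>
      (mul_eq_zero.mp (hzero i)).resolve_right (sub_ne_zero.mpr (h i).symm)
    simpa [hvanish] using ht.2
  refine ⟨k, funext fun i => ?_⟩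
  rcases eq_or_ne i k with rfl | hik
  · simp [hk]
  · rw [Pi.single_eq_of_ne hik]
    have htwo := Finset.add_le_sum (fun j _ => ht.1 j) (Finset.mem_univ i) (Finset.mem_univ k) hik
    linarith [ht.1 i, ht.2]

lemma memLp_eval_of_ae_mem_stdSimplex {ι : Type*} [Fintype ι] {ν : Measure (ι → ℝ)}
    [IsFiniteMeasure ν] (h : ∀ᵐ x ∂ν, x ∈ stdSimplex ℝ ι) (p : ENNReal) (j : ι) :
    MemLp (fun x => x j) p ν := by
  refine MemLp.of_bound (measurable_pi_apply j).aestronglyMeasurable 1 ?_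
  filter_upwards [h] with x hx
  obtain ⟨h0, h1⟩ := mem_Icc_of_mem_stdSimplex hx j
  rwa [Real.norm_of_nonneg h0]

lemma measure_pi_eval_eq_eval_eq_zero {κ α : Type*} [Fintype κ] [MeasurableSpace α]
    [MeasurableEq α] (ν : Measure α) [IsProbabilityMeasure ν] [NullSingletonClass ν]
    {a b : κ} (hab : a ≠ b) : Measure.pi (fun _ : κ => ν) {m | m a = m b} = 0 := by
  have hind : (fun m : κ → α => m a) ⟂ᵢ[Measure.pi fun _ => ν] fun m => m b :=
    (iIndepFun_pi (X := fun _ => id) fun _ => aemeasurable_id).indepFun hab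
  have hpair : (Measure.pi fun _ : κ => ν).map (fun m => (m a, m b)) = ν.prod ν := by
    rw [(indepFun_iff_map_prod_eq_prod_map_map (measurable_pi_apply a).aemeasurable
      (measurable_pi_apply b).aemeasurable).mp hind,
      (measurePreserving_eval _ a).map_eq, (measurePreserving_eval _ b).map_eq]
  have hdiag : {m : κ → α | m a = m b} = (fun m => (m a, m b)) ⁻¹' Set.diagonal α := rfl
  have hslice : ∀ x : α, Prod.mk x ⁻¹' Set.diagonal α = {x} := fun x => by
    ext; simp [eq_comm]
  rw [hdiag, ← Measure.map_apply (by fun_prop) measurableSet_diagonal, hpair,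
    Measure.prod_apply measurableSet_diagonal]
  simp [hslice]

lemma measurable_mul_left {κ ι : Type*} [Fintype κ] (T : κ → κ → ℝ) :
    Measurable fun (m : κ → ι → ℝ) i j => ∑ k, T i k * m k j := by
  fun_prop

section RowMixing

variable {κ ι : Type*} [Fintype κ] [Fintype ι] (ν : Measure (ι → ℝ))

lemma sum_sq_eq_one_of_map_mul_eq [IsProbabilityMeasure ν] [NullSingletonClass ν]
    (hL2 : ∀ j, MemLp (fun x => x j) 2 ν) (T : κ → κ → ℝ)
    (h : (Measure.pi fun _ : κ => ν).map (fun m i j => ∑ k, T i k * m k j) =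
      Measure.pi fun _ => ν) (i : κ) :
    ∑ k, T i k ^ 2 = 1 := by
  obtain ⟨j, hvar⟩ := exists_variance_eval_pos ν hL2
  have hentry : ∀ k, Var[fun m : κ → ι → ℝ => m k j; Measure.pi fun _ => ν] =
      Var[fun x => x j; ν] := fun k =>
    (measurePreserving_eval (fun _ : κ => ν) k).variance_fun_comp (f := fun x => x j)
      (measurable_pi_apply j).aemeasurable
  have hmix : Var[fun m : κ → ι → ℝ => ∑ k, T i k * m k j; Measure.pi fun _ => ν] =
      Var[fun m : κ → ι → ℝ => m i j; Measure.pi fun _ => ν] := by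
    conv_rhs => rw [← h]
    rw [variance_map (X := fun m : κ → ι → ℝ => m i j)
      ((measurable_pi_apply j).comp (measurable_pi_apply i)).aemeasurable
      (measurable_mul_left T).aemeasurable]
    rfl
  have hind : iIndepFun (fun k (m : κ → ι → ℝ) => m k j) (Measure.pi fun _ => ν) :=
    iIndepFun_pi (X := fun _ (x : ι → ℝ) => x j) fun _ => (measurable_pi_apply j).aemeasurable
  have hL2' : ∀ k, MemLp (fun m : κ → ι → ℝ => m k j) 2 (Measure.pi fun _ => ν) := fun k =>
    (hL2 j).comp_measurePreserving (measurePreserving_eval (fun _ : κ => ν) k)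
  rw [variance_sum_mul_of_pairwise_indepFun hL2' (fun k l hkl => hind.indepFun hkl)] at hmix
  simp only [hentry, ← Finset.sum_mul] at hmix
  exact (mul_eq_right₀ hvar.ne').mp hmix

theorem exists_perm_of_map_mul_eq [DecidableEq κ] [IsProbabilityMeasure ν]
    [NullSingletonClass ν] (hL2 : ∀ j, MemLp (fun x => x j) 2 ν) (T : κ → κ → ℝ)
    (hT : ∀ i, T i ∈ stdSimplex ℝ κ)
    (h : (Measure.pi fun _ : κ => ν).map (fun m i j => ∑ k, T i k * m k j) =
      Measure.pi fun _ => ν) :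
    ∃ σ : Equiv.Perm κ, ∀ i j, T i j = if σ i = j then 1 else 0 := by
  choose f hf using fun i => exists_eq_single_of_mem_stdSimplex_of_sum_sq_eq_one (hT i)
    (sum_sq_eq_one_of_map_mul_eq ν hL2 T h i)
  have hmul : (fun (m : κ → ι → ℝ) i j => ∑ k, T i k * m k j) = fun m i => m (f i) := by
    funext m i j
    simp [hf, Pi.single_apply, ite_mul]
  have hinj : f.Injective := by
    intro a b hfab
    by_contra hab
    have hnull := measure_pi_eval_eq_eval_eq_zero ν hab
    rw [← h, hmul, Measure.map_apply (by fun_prop)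
      (measurableSet_eq_fun (by fun_prop) (by fun_prop))] at hnull
    simp [hfab] at hnull
  exact ⟨Equiv.ofBijective f hinj.bijective_of_finite, fun i j => by
    simp [hf, Pi.single_apply, eq_comm]⟩

end RowMixing

lemma map_comp_perm_pi {κ α : Type*} [Fintype κ] [MeasurableSpace α] (ν : Measure α)
    [SigmaFinite ν] (σ : Equiv.Perm κ) :
    (Measure.pi fun _ : κ => ν).map (fun m i => m (σ i)) = Measure.pi fun _ => ν :=
  (measurePreserving_arrowCongr' (fun _ => ν) (fun _ => ν) σ.symm (MeasurableEquiv.refl α)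
    fun _ => MeasurePreserving.id ν).map_eq

lemma measurableSet_simplexSet (n : ℕ) : MeasurableSet (simplexSet n) :=
  (isClosed_stdSimplex ℝ (Fin n)).preimage (PiLp.continuous_ofLp 2 _) |>.measurableSet

lemma ae_mem_stdSimplex_simplexUniform (n : ℕ) :
    ∀ᵐ x ∂simplexUniform n, x ∈ stdSimplex ℝ (Fin n) := by
  rw [simplexUniform, MeasurableEquiv.measurableEmbedding _ |>.ae_map_iff]
  exact ae_cond_mem (measurableSet_simplexSet n)

lemma nullSingletonClass_simplexUniform {n : ℕ} (hn : 2 ≤ n) :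
    NullSingletonClass (simplexUniform n) := by
  have : NullSingletonClass (μH[(n : ℝ) - 1] : Measure (EuclideanSpace ℝ (Fin n))) :=
    Measure.nullSingletonClass_hausdorff _ (by
      rw [sub_pos, Nat.one_lt_cast]; omega)
  refine ⟨fun x => ?_⟩
  rw [simplexUniform, MeasurableEquiv.map_apply]
  exact cond_absolutelyContinuous <|
    (Set.subsingleton_singleton.preimage (MeasurableEquiv.injective _)).measure_zero _

/- `simplexUniformE n` is `0` (junk value of `⁻¹`) unless `0 < μH[n - 1] Λ_n < ∞`. Instead of
computing this Hausdorff measure, we read the normalization off the law of `M`. -/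
lemma isProbabilityMeasure_simplexUniform {n : ℕ} (hn : 1 ≤ n)
    (h : IsProbabilityMeasure (markovUniform n)) : IsProbabilityMeasure (simplexUniform n) := by
  have hne : simplexUniformE n ≠ 0 := by
    rintro h0
    have : markovUniform n = 0 := by
      rw [← Measure.measure_univ_eq_zero, markovUniform, simplexUniform, h0, Measure.pi_univ]
      simpa using Nat.one_le_iff_ne_zero.mp hn
    exact IsProbabilityMeasure.ne_zero _ this
  obtain ⟨hinf, hzero⟩ : _ ∧ _ := not_or.mp (cond_eq_zero.not.mp hne)
  have : IsProbabilityMeasure (simplexUniformE n) := cond_isProbabilityMeasure_of_finite hzero hinf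
  exact Measure.isProbabilityMeasure_map (MeasurableEquiv.measurable _).aemeasurable

/-- if `n ≥ 2`, `T` is an `n × n` Markov matrix and `M ~ U(M_n)`, then the
product `T·M` has the same law as `M` if and only if `T` is a permutation matrix. -/
theorem markovUniform_left_translation_invariant_iff (n : ℕ) (hn : 2 ≤ n)
    (T : Fin n → Fin n → ℝ) (hT : IsMarkovMatrix T)
    {Ω : Type*} [MeasurableSpace Ω] (P : Measure Ω) [IsProbabilityMeasure P]
    (M : Ω → Fin n → Fin n → ℝ) (hM : Measurable M)
    (hlaw : P.map M = markovUniform n) :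
    P.map (fun ω => fun i j => ∑ k, T i k * M ω k j) = P.map M ↔
      IsPermutationMatrix T := by
  have : IsProbabilityMeasure (simplexUniform n) :=
    isProbabilityMeasure_simplexUniform (by omega)
      (hlaw ▸ Measure.isProbabilityMeasure_map hM.aemeasurable)
  have : NullSingletonClass (simplexUniform n) := nullSingletonClass_simplexUniform hn
  have hmap : P.map (fun ω i j => ∑ k, T i k * M ω k j) =
      (markovUniform n).map fun m i j => ∑ k, T i k * m k j := by
    rw [← hlaw, Measure.map_map (measurable_mul_left T) hM]
    rfl
  rw [hmap, hlaw]
  constructor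
  · exact exists_perm_of_map_mul_eq _
      (memLp_eval_of_ae_mem_stdSimplex (ae_mem_stdSimplex_simplexUniform n) 2) T
      fun i => ⟨hT.1 i, hT.2 i⟩
  · rintro ⟨σ, hσ⟩
    have hperm :
        (fun (m : Fin n → Fin n → ℝ) i j => ∑ k, T i k * m k j) = fun m i => m (σ i) := by
      funext m i j
      simp [hσ, ite_mul]
    rw [hperm]
    exact map_comp_perm_pi _ σ
end
end

section
/- Let n ≥ 2. There is no probability measure μ on the set M_n of n×n Markov matrices which is absolutely continuous with respect to U(M_n), has full support (its topological support equals all of M_n), and is invariant under every left translation M ↦ T·M with T running over all n×n Markov matrices. The same holds with right translations M ↦ M·T in place of left translations. -/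
/-!
Invariance under a single Markov matrix already rules out full support. Let `T` be the rank-one
Markov matrix all of whose rows are the basis vector `e₀`. Every product `T·M` has all rows equal
and every product `M·T` vanishes off the column `0`; both are closed conditions that the identity
matrix violates. A `T`-invariant measure lives on the range of the translation by `T`, so it gives
mass zero to an open neighbourhood of the identity avoiding that closed set.
-/

open MeasureTheory ProbabilityTheory

noncomputable section

open Set

section FullSupport

variable {α : Type*} [TopologicalSpace α] [MeasurableSpace α] [OpensMeasurableSpace α]

def HasFullSupportOn (μ : Measure α) (S : Set α) : Prop :=
  ∀ U : Set α, IsOpen U → (U ∩ S).Nonempty → 0 < μ U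

theorem HasFullSupportOn.subset_closure_range_of_map_eq {μ : Measure α} {S : Set α}
    (hμ : HasFullSupportOn μ S) {f : α → α} (hf : Measurable f) (hinv : μ.map f = μ) :
    S ⊆ closure (range f) := by
  intro x hx
  rw [mem_closure_iff]
  intro U hU hxU
  have hpos := hμ U hU ⟨x, hxU, hx⟩
  rw [← hinv, Measure.map_apply hf hU.measurableSet] at hpos
  obtain ⟨y, hy⟩ := nonempty_of_measure_ne_zero hpos.ne'
  exact ⟨f y, hy, y, rfl⟩

end FullSupport

namespace MarkovMatrix

variable {n : ℕ}

def leftMul (T M : Fin n → Fin n → ℝ) : Fin n → Fin n → ℝ :=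
  fun i j => ∑ k, T i k * M k j

def rightMul (T M : Fin n → Fin n → ℝ) : Fin n → Fin n → ℝ :=
  fun i j => ∑ k, M i k * T k j

theorem measurable_leftMul (T : Fin n → Fin n → ℝ) : Measurable (leftMul T) := by
  unfold leftMul; fun_prop

theorem measurable_rightMul (T : Fin n → Fin n → ℝ) : Measurable (rightMul T) := by
  unfold rightMul; fun_prop

def constRow (j₀ : Fin n) : Fin n → Fin n → ℝ :=
  fun _ j => if j = j₀ then 1 else 0

theorem isMarkovMatrix_constRow (j₀ : Fin n) : IsMarkovMatrix (constRow j₀) :=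
  ⟨fun _ j => by unfold constRow; split_ifs <;> norm_num, fun _ => by simp [constRow]⟩

theorem isMarkovMatrix_one : IsMarkovMatrix (1 : Matrix (Fin n) (Fin n) ℝ) :=
  ⟨fun i j => by rw [Matrix.one_apply]; split_ifs <;> norm_num,
    fun i => by simp [Matrix.one_apply]⟩

theorem range_leftMul_constRow_subset (j₀ : Fin n) :
    range (leftMul (constRow j₀)) ⊆ {A | ∀ i, A i = A j₀} := by
  rintro _ ⟨M, rfl⟩ i
  ext j
  simp [leftMul, constRow, ite_mul]

theorem range_rightMul_constRow_subset {j₀ j : Fin n} (hj : j ≠ j₀) :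
    range (rightMul (constRow j₀)) ⊆ {A | ∀ i, A i j = 0} := by
  rintro _ ⟨M, rfl⟩ i
  simp [rightMul, constRow, hj]

theorem isClosed_setOf_rows_eq (j₀ : Fin n) :
    IsClosed {A : Fin n → Fin n → ℝ | ∀ i, A i = A j₀} := by
  rw [ofPred_forall]
  exact isClosed_iInter fun i => isClosed_eq (continuous_apply i) (continuous_apply j₀)

theorem isClosed_setOf_col_eq_zero (j : Fin n) :
    IsClosed {A : Fin n → Fin n → ℝ | ∀ i, A i j = 0} := by
  rw [ofPred_forall]
  exact isClosed_iInter fun i =>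
    isClosed_eq ((continuous_apply j).comp (continuous_apply i)) continuous_const

end MarkovMatrix

open MarkovMatrix in
/-- for `n ≥ 2` there is no probability measure on `M_n`, absolutely continuous
with respect to `U(M_n)`, with full topological support (every open set meeting `M_n` has
positive measure), and invariant under every left translation `M ↦ T·M`, `T ∈ M_n`;
and the same holds for right translations `M ↦ M·T`. -/
theorem no_idempotent_full_support_measure_on_markov (n : ℕ) (hn : 2 ≤ n) :
    (¬ ∃ μ : Measure (Fin n → Fin n → ℝ), IsProbabilityMeasure μ ∧
        μ ≪ markovUniform n ∧
        (∀ U : Set (Fin n → Fin n → ℝ), IsOpen U →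
          (U ∩ {A | IsMarkovMatrix A}).Nonempty → 0 < μ U) ∧
        (∀ T : Fin n → Fin n → ℝ, IsMarkovMatrix T →
          μ.map (fun M => fun i j => ∑ k, T i k * M k j) = μ)) ∧
    (¬ ∃ μ : Measure (Fin n → Fin n → ℝ), IsProbabilityMeasure μ ∧
        μ ≪ markovUniform n ∧
        (∀ U : Set (Fin n → Fin n → ℝ), IsOpen U →
          (U ∩ {A | IsMarkovMatrix A}).Nonempty → 0 < μ U) ∧
        (∀ T : Fin n → Fin n → ℝ, IsMarkovMatrix T →
          μ.map (fun M => fun i j => ∑ k, M i k * T k j) = μ)) := by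
  let i₀ : Fin n := ⟨0, by omega⟩
  let i₁ : Fin n := ⟨1, hn⟩
  have hne : i₁ ≠ i₀ := by simp [i₀, i₁, Fin.ext_iff]
  constructor
  · rintro ⟨μ, -, -, hsupp, hinv⟩
    have hone := HasFullSupportOn.subset_closure_range_of_map_eq hsupp (measurable_leftMul _)
      (hinv _ (isMarkovMatrix_constRow i₀)) isMarkovMatrix_one
    have hrows :=
      closure_minimal (range_leftMul_constRow_subset i₀) (isClosed_setOf_rows_eq i₀) hone
    simpa [Matrix.one_apply, hne.symm] using congrFun (hrows i₁) i₁
  · rintro ⟨μ, -, -, hsupp, hinv⟩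
    have hone := HasFullSupportOn.subset_closure_range_of_map_eq hsupp (measurable_rightMul _)
      (hinv _ (isMarkovMatrix_constRow i₀)) isMarkovMatrix_one
    have hcol :=
      closure_minimal (range_rightMul_constRow_subset hne) (isClosed_setOf_col_eq_zero i₁) hone
    simpa using hcol i₁
end
end

section
/- Let (X_{i,j})_{i,j≥1} be an infinite array of i.i.d. real random variables with mean m ≠ 0 and finite variance, and set S_{i,n} = X_{i,1}+⋯+X_{i,n}. Then almost surely, max_{1≤i≤n} |n/S_{i,n} − 1/m| → 0 as n → ∞ (in particular, almost surely, for all large n all the sums S_{1,n},…,S_{n,n} are nonzero). -/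
/-!
Write `Y i j = X i j - m`; by continuity of `x ↦ 1 / x` at `m ≠ 0` it suffices that almost surely
`max_{i<n} |Y i 0 + ⋯ + Y i (n-1)| = o(n)`. Cut `n` into dyadic blocks `2^j ≤ n < 2^(j+1)`: by
Borel–Cantelli it is enough that, for each `ε > 0`, the probabilities that some row `i < 2^(j+1)`
has a partial sum of length at most `N = 2^(j+1)` exceeding `ε 2^j` are summable in `j`.

For a single row with partial sums `S_k`, decoupling at the first time `|S_k|` reaches a level (an
event of the past of the row, independent of the later increments) gives two maximal
inequalities: an Etemadi-type bound `P(max_{k≤N} |S_k| ≥ 3α) ≤ 2 N Var / α²` and a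
Hoffmann-Jørgensen-type bound
`P(max_{k≤N} |S_k| ≥ 3t) ≤ ∑_{k<N} P(|Y_k| ≥ t) + P(max_{k≤N} |S_k| ≥ t/2)²`.
With `t = ε 2^j / 3` the squared term is `O(2^{-2j})`, so after the union over `2^(j+1)` rows
the block probability is `O(4^j P(|Y| ≥ ε 2^j / 3) + 2^{-j})`, and
`∑_j 4^j P(|Y| ≥ c 2^j) < ∞` is exactly the finiteness of the variance.
-/

open MeasureTheory ProbabilityTheory Filter Topology Finset
open scoped ENNReal

section FirstPassage

variable {Ω : Type*} (Y : ℕ → Ω → ℝ) (a : ℝ)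

abbrev blockSigma (S : Set ℕ) : MeasurableSpace Ω :=
  ⨆ j ∈ S, MeasurableSpace.comap (Y j) inferInstance

def partialSumsExceed (N : ℕ) : Set Ω :=
  {ω | ∃ k ≤ N, a ≤ |∑ j ∈ range k, Y j ω|}

def firstPassage (k : ℕ) : Set Ω :=
  {ω | a ≤ |∑ j ∈ range k, Y j ω| ∧ ∀ l < k, |∑ j ∈ range l, Y j ω| < a}

variable {Y a}

lemma measurable_blockSigma_sum {S : Set ℕ} {u : Finset ℕ} (hu : ↑u ⊆ S) :
    Measurable[blockSigma Y S] fun ω => ∑ j ∈ u, Y j ω :=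
  Finset.measurable_fun_sum u fun j hj => (comap_measurable (Y j)).mono
    (le_biSup (fun i => MeasurableSpace.comap (Y i) inferInstance) (hu hj)) le_rfl

lemma measurableSet_firstPassage (k : ℕ) :
    MeasurableSet[blockSigma Y (Set.Iio k)] (firstPassage Y a k) := by
  have hS : ∀ l ≤ k, Measurable[blockSigma Y (Set.Iio k)] fun ω => |∑ j ∈ range l, Y j ω| :=
    fun l hl => measurable_abs.comp <| measurable_blockSigma_sum fun j hj => by
      simp only [coe_range, Set.mem_Iio] at hj ⊢; omega
  simp only [firstPassage, Set.ofPred_and, Set.ofPred_forall]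
  exact (measurableSet_le measurable_const (hS k le_rfl)).inter
    (MeasurableSet.iInter fun l => MeasurableSet.iInter fun hl =>
      measurableSet_lt (hS l hl.le) measurable_const)

lemma disjoint_firstPassage {k l : ℕ} (hkl : k ≠ l) :
    Disjoint (firstPassage Y a k) (firstPassage Y a l) := by
  wlog hlt : k < l generalizing k l
  · exact (this hkl.symm (hkl.lt_or_gt.resolve_left hlt)).symm
  exact Set.disjoint_left.2 fun ω hk hl => (hl.2 k hlt).not_ge hk.1

lemma exists_mem_firstPassage {ω : Ω} {n : ℕ} (hn : a ≤ |∑ j ∈ range n, Y j ω|) :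
    ∃ k ≤ n, ω ∈ firstPassage Y a k := by
  classical
  have hex : ∃ k, a ≤ |∑ j ∈ range k, Y j ω| := ⟨n, hn⟩
  exact ⟨Nat.find hex, Nat.find_min' hex hn, Nat.find_spec hex,
    fun l hl => not_le.1 (Nat.find_min hex hl)⟩

lemma firstPassage_subset_partialSumsExceed {k N : ℕ} (hk : k ≤ N) :
    firstPassage Y a k ⊆ partialSumsExceed Y a N :=
  fun _ hω => ⟨k, hk, hω.1⟩

lemma measurableSet_le_abs_sum_Ico (b : ℝ) (k n : ℕ) :
    MeasurableSet[blockSigma Y (Set.Ici k)] {ω | b ≤ |∑ j ∈ Ico k n, Y j ω|} :=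
  measurableSet_le measurable_const
    (measurable_abs.comp (measurable_blockSigma_sum fun _ hj => (mem_Ico.1 hj).1))

lemma partialSumsExceed_subset_last_union_firstPassage (α : ℝ) (N : ℕ) :
    partialSumsExceed Y (3 * α) N ⊆ {ω | α ≤ |∑ j ∈ range N, Y j ω|} ∪
      ⋃ k ∈ range (N + 1), firstPassage Y (3 * α) k ∩ {ω | 2 * α ≤ |∑ j ∈ Ico k N, Y j ω|} := by
  rintro ω ⟨n, hnN, hn⟩
  obtain ⟨k, hkn, hk⟩ := exists_mem_firstPassage hn
  refine or_iff_not_imp_left.2 fun hN => Set.mem_biUnion (mem_range.2 (by omega)) ⟨hk, ?_⟩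
  have := abs_sub_abs_le_abs_sub (∑ j ∈ range k, Y j ω) (∑ j ∈ range N, Y j ω)
  rw [Set.mem_ofPred_eq, sum_Ico_eq_sub _ (by omega), abs_sub_comm]
  simp only [Set.mem_ofPred_eq, not_le] at hN
  linarith [hk.1]

lemma partialSumsExceed_subset_bigStep_union_firstPassage {t : ℝ} (ht : 0 < t) (N : ℕ) :
    partialSumsExceed Y (3 * t) N ⊆ (⋃ j ∈ range N, {ω | t ≤ |Y j ω|}) ∪
      ⋃ k ∈ range (N + 1), firstPassage Y t k ∩
        ⋃ n ∈ Icc k N, {ω | t ≤ |∑ j ∈ Ico k n, Y j ω|} := by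
  rintro ω ⟨n, hnN, hn⟩
  by_cases hbig : ∃ j < N, t ≤ |Y j ω|
  · obtain ⟨j, hj, hjt⟩ := hbig
    exact Or.inl (Set.mem_biUnion (mem_range.2 hj) hjt)
  push Not at hbig
  obtain ⟨k, hkn, hk⟩ := exists_mem_firstPassage (a := t) (by linarith : t ≤ _)
  obtain ⟨k, rfl⟩ : ∃ l, k = l + 1 := Nat.exists_eq_add_one.2 <| Nat.pos_of_ne_zero
    fun h => by subst h; simp [firstPassage, ht.not_ge] at hk
  have hcap : |∑ j ∈ range (k + 1), Y j ω| < 2 * t := by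
    rw [sum_range_succ]
    linarith [abs_add_le (∑ j ∈ range k, Y j ω) (Y k ω), hk.2 k k.lt_succ_self,
      hbig k (by omega)]
  refine Or.inr (Set.mem_biUnion (mem_range.2 (by omega))
    ⟨hk, Set.mem_biUnion (mem_Icc.2 ⟨hkn, hnN⟩) ?_⟩)
  rw [Set.mem_ofPred_eq, sum_Ico_eq_sub _ hkn]
  linarith [abs_sub_abs_le_abs_sub (∑ j ∈ range n, Y j ω) (∑ j ∈ range (k + 1), Y j ω)]

variable [MeasurableSpace Ω] {P : Measure Ω}

lemma ProbabilityTheory.iIndepFun.measure_inter_blockSigma (hindep : iIndepFun Y P)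
    (hY : ∀ j, Measurable (Y j))
    {S T : Set ℕ} (hST : Disjoint S T) {A B : Set Ω}
    (hA : MeasurableSet[blockSigma Y S] A) (hB : MeasurableSet[blockSigma Y T] B) :
    P (A ∩ B) = P A * P B :=
  (Indep_iff _ _ _).1 (indep_iSup_of_disjoint (fun j => (hY j).comap_le)
    ((iIndepFun_iff_iIndep _ _ _).1 hindep) hST) A B hA hB

lemma measure_biUnion_firstPassage_inter_le (hindep : iIndepFun Y P) (hY : ∀ j, Measurable (Y j))
    {N : ℕ} {B : ℕ → Set Ω} {q : ℝ≥0∞}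
    (hB : ∀ k ≤ N, MeasurableSet[blockSigma Y (Set.Ici k)] (B k)) (hBq : ∀ k ≤ N, P (B k) ≤ q) :
    P (⋃ k ∈ range (N + 1), firstPassage Y a k ∩ B k) ≤ P (partialSumsExceed Y a N) * q := by
  have hT : ∀ k, MeasurableSet (firstPassage Y a k) := fun k =>
    iSup₂_le (fun j _ => (hY j).comap_le) _ (measurableSet_firstPassage k)
  calc P (⋃ k ∈ range (N + 1), firstPassage Y a k ∩ B k)
      ≤ ∑ k ∈ range (N + 1), P (firstPassage Y a k ∩ B k) := measure_biUnion_finset_le _ _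
    _ = ∑ k ∈ range (N + 1), P (firstPassage Y a k) * P (B k) :=
        sum_congr rfl fun k hk => hindep.measure_inter_blockSigma hY
          (Set.Iio_disjoint_Ici le_rfl) (measurableSet_firstPassage k)
          (hB k (Nat.lt_succ_iff.1 (mem_range.1 hk)))
    _ ≤ ∑ k ∈ range (N + 1), P (firstPassage Y a k) * q :=
        sum_le_sum fun k hk => by gcongr; exact hBq k (Nat.lt_succ_iff.1 (mem_range.1 hk))
    _ = P (⋃ k ∈ range (N + 1), firstPassage Y a k) * q := by
        rw [← sum_mul, measure_biUnion_finset (fun k _ l _ hkl => disjoint_firstPassage hkl)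
          fun k _ => hT k]
    _ ≤ P (partialSumsExceed Y a N) * q := by
        gcongr
        exact Set.iUnion₂_subset fun k hk =>
          firstPassage_subset_partialSumsExceed (Nat.lt_succ_iff.1 (mem_range.1 hk))

end FirstPassage

section MaximalInequalities

variable {Ω : Type*} [MeasurableSpace Ω] {P : Measure Ω} {Y : ℕ → Ω → ℝ}

lemma measure_le_abs_sum_le [IsFiniteMeasure P]
    (hindep : Pairwise fun i j => IndepFun (Y i) (Y j) P)
    (hL2 : ∀ j, MemLp (Y j) 2 P) (hmean : ∀ j, P[Y j] = 0) {v : ℝ}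
    (hv : ∀ j, variance (Y j) P ≤ v) (s : Finset ℕ) {a : ℝ} (ha : 0 < a) :
    P {ω | a ≤ |∑ j ∈ s, Y j ω|} ≤ ENNReal.ofReal (#s * v / a ^ 2) := by
  have hmean_sum : P[∑ j ∈ s, Y j] = 0 := by
    simp only [Finset.sum_apply]
    rw [integral_finsetSum s fun j _ => (hL2 j).integrable one_le_two]
    exact sum_eq_zero fun j _ => hmean j
  have hvar : variance (∑ j ∈ s, Y j) P ≤ #s * v := by
    rw [IndepFun.variance_sum (fun j _ => hL2 j) fun i _ j _ hij => hindep hij]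
    simpa using sum_le_sum fun j (_ : j ∈ s) => hv j
  calc P {ω | a ≤ |∑ j ∈ s, Y j ω|}
      = P {ω | a ≤ |(∑ j ∈ s, Y j) ω - P[∑ j ∈ s, Y j]|} := by
        rw [hmean_sum]
        simp only [sub_zero, Finset.sum_apply]
    _ ≤ ENNReal.ofReal (variance (∑ j ∈ s, Y j) P / a ^ 2) :=
        meas_ge_le_variance_div_sq (memLp_finsetSum' s fun j _ => hL2 j) ha
    _ ≤ ENNReal.ofReal (#s * v / a ^ 2) := by gcongr

lemma measure_partialSumsExceed_le_of_variance_le [IsProbabilityMeasure P]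
    (hindep : iIndepFun Y P) (hY : ∀ j, Measurable (Y j)) (hL2 : ∀ j, MemLp (Y j) 2 P)
    (hmean : ∀ j, P[Y j] = 0) {v : ℝ} (hv : ∀ j, variance (Y j) P ≤ v) (N : ℕ) {α : ℝ}
    (hα : 0 < α) :
    P (partialSumsExceed Y (3 * α) N) ≤ ENNReal.ofReal (2 * N * v / α ^ 2) := by
  have hv0 : 0 ≤ v := (variance_nonneg _ _).trans (hv 0)
  have hcheb : ∀ s : Finset ℕ, #s ≤ N → ∀ β, α ≤ β →
      P {ω | β ≤ |∑ j ∈ s, Y j ω|} ≤ ENNReal.ofReal (N * v / α ^ 2) := fun s hs β hβ =>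
    (measure_le_abs_sum_le (fun i j hij => hindep.indepFun hij) hL2 hmean hv s
      (hα.trans_le hβ)).trans (ENNReal.ofReal_le_ofReal (by gcongr))
  calc P (partialSumsExceed Y (3 * α) N)
      ≤ P {ω | α ≤ |∑ j ∈ range N, Y j ω|} + P (⋃ k ∈ range (N + 1), firstPassage Y (3 * α) k ∩
          {ω | 2 * α ≤ |∑ j ∈ Ico k N, Y j ω|}) :=
        (measure_mono (partialSumsExceed_subset_last_union_firstPassage α N)).trans
          (measure_union_le _ _)
    _ ≤ ENNReal.ofReal (N * v / α ^ 2) + 1 * ENNReal.ofReal (N * v / α ^ 2) := by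
        gcongr
        · exact hcheb _ (card_range N).le α le_rfl
        · refine (measure_biUnion_firstPassage_inter_le hindep hY
            (fun k _ => measurableSet_le_abs_sum_Ico _ k N) fun k _ => ?_).trans
            (by gcongr; exact prob_le_one)
          exact hcheb _ (by simp) _ (by linarith)
    _ = ENNReal.ofReal (2 * N * v / α ^ 2) := by
        rw [one_mul, ← ENNReal.ofReal_add (by positivity) (by positivity)]
        ring_nf

lemma measure_partialSumsExceed_le_sum_add_sq (hindep : iIndepFun Y P)
    (hY : ∀ j, Measurable (Y j)) (N : ℕ) {t : ℝ} (ht : 0 < t) :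
    P (partialSumsExceed Y (3 * t) N) ≤
      ∑ j ∈ range N, P {ω | t ≤ |Y j ω|} + P (partialSumsExceed Y (t / 2) N) ^ 2 := by
  set D : ℕ → Set Ω := fun k => ⋃ n ∈ Icc k N, {ω | t ≤ |∑ j ∈ Ico k n, Y j ω|}
  have hD : ∀ k ≤ N, P (D k) ≤ P (partialSumsExceed Y (t / 2) N) := by
    refine fun k hk => measure_mono fun ω hω => ?_
    obtain ⟨n, hn, hgap⟩ := Set.mem_iUnion₂.1 hω
    rw [Set.mem_ofPred_eq, sum_Ico_eq_sub _ (mem_Icc.1 hn).1] at hgap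
    by_contra h
    simp only [partialSumsExceed, Set.mem_ofPred_eq, not_exists, not_and, not_le] at h
    linarith [abs_sub (∑ j ∈ range n, Y j ω) (∑ j ∈ range k, Y j ω), h n (mem_Icc.1 hn).2,
      h k hk]
  have hDmeas : ∀ k ≤ N, MeasurableSet[blockSigma Y (Set.Ici k)] (D k) := fun k _ =>
    Finset.measurableSet_biUnion _ fun n _ => measurableSet_le_abs_sum_Ico t k n
  calc P (partialSumsExceed Y (3 * t) N)
      ≤ P (⋃ j ∈ range N, {ω | t ≤ |Y j ω|}) +
          P (⋃ k ∈ range (N + 1), firstPassage Y t k ∩ D k) :=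
        (measure_mono (partialSumsExceed_subset_bigStep_union_firstPassage ht N)).trans
          (measure_union_le _ _)
    _ ≤ ∑ j ∈ range N, P {ω | t ≤ |Y j ω|} +
          P (partialSumsExceed Y t N) * P (partialSumsExceed Y (t / 2) N) := by
        gcongr
        · exact measure_biUnion_finset_le _ _
        · exact measure_biUnion_firstPassage_inter_le hindep hY hDmeas hD
    _ ≤ ∑ j ∈ range N, P {ω | t ≤ |Y j ω|} + P (partialSumsExceed Y (t / 2) N) ^ 2 := by
        rw [sq]
        gcongr
        exact fun ω ⟨k, hk, h⟩ => ⟨k, hk, by linarith⟩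

end MaximalInequalities

section IdenticallyDistributed

variable {Ω : Type*} [MeasurableSpace Ω] {P : Measure Ω}

lemma measure_partialSumsExceed_le_of_identDistrib [IsProbabilityMeasure P]
    {Y : ℕ → Ω → ℝ} {Z : Ω → ℝ} (hindep : iIndepFun Y P) (hY : ∀ j, Measurable (Y j))
    (hident : ∀ j, IdentDistrib (Y j) Z P P) (hZ : MemLp Z 2 P) (hZ0 : P[Z] = 0)
    (N : ℕ) {t : ℝ} (ht : 0 < t) :
    P (partialSumsExceed Y (3 * t) N) ≤
      N * P {ω | t ≤ |Z ω|} + ENNReal.ofReal (72 * N * variance Z P / t ^ 2) ^ 2 := by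
  have htail : ∀ j, P {ω | t ≤ |Y j ω|} = P {ω | t ≤ |Z ω|} := fun j =>
    (hident j).measure_mem_eq (measurableSet_le measurable_const measurable_abs)
  have hmax : P (partialSumsExceed Y (t / 2) N) ≤
      ENNReal.ofReal (72 * N * variance Z P / t ^ 2) := by
    have h := measure_partialSumsExceed_le_of_variance_le hindep hY
      (fun j => (hident j).memLp_iff.2 hZ) (fun j => (hident j).integral_eq.trans hZ0)
      (fun j => (hident j).variance_eq.le) N (by positivity : 0 < t / 6)
    rw [show 3 * (t / 6) = t / 2 by ring] at h
    convert h using 2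
    field_simp
    ring
  calc P (partialSumsExceed Y (3 * t) N)
      ≤ ∑ j ∈ range N, P {ω | t ≤ |Y j ω|} + P (partialSumsExceed Y (t / 2) N) ^ 2 :=
        measure_partialSumsExceed_le_sum_add_sq hindep hY N ht
    _ ≤ N * P {ω | t ≤ |Z ω|} + ENNReal.ofReal (72 * N * variance Z P / t ^ 2) ^ 2 := by
        rw [sum_congr rfl fun j _ => htail j, sum_const, card_range, nsmul_eq_mul]
        gcongr

lemma sum_range_ite_le_four_pow_le {c : ℝ} (hc : 0 < c) (y : ℝ) (n : ℕ) :
    ∑ j ∈ range n, (if c * 2 ^ j ≤ y then (4 : ℝ) ^ j else 0) ≤ 2 / c ^ 2 * y ^ 2 := by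
  induction n with
  | zero => simp only [range_zero, sum_empty]; positivity
  | succ n ih =>
    rw [sum_range_succ]
    split_ifs with hn
    · have hall : ∀ j ∈ range n, c * 2 ^ j ≤ y := fun j hj =>
        le_trans (by gcongr; exacts [one_le_two, (mem_range.1 hj).le]) hn
      rw [sum_congr rfl fun j hj => if_pos (hall j hj), ← sum_range_succ, geom_sum_eq (by norm_num)]
      have hsq : (c * 2 ^ n) ^ 2 ≤ y ^ 2 := pow_le_pow_left₀ (by positivity) hn 2
      rw [mul_pow, ← pow_mul, mul_comm n 2, pow_mul] at hsq
      rw [div_mul_eq_mul_div, le_div_iff₀ (by positivity)]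
      norm_num at hsq ⊢
      rw [pow_succ]
      nlinarith
    · simpa using ih

lemma tsum_four_pow_mul_measure_le_abs_ne_top {Z : Ω → ℝ} (hZ : MemLp Z 2 P) {c : ℝ}
    (hc : 0 < c) : ∑' j : ℕ, 4 ^ j * P {ω | c * 2 ^ j ≤ |Z ω|} ≠ ∞ := by
  set A : ℕ → Set Ω := fun j => {ω | c * 2 ^ j ≤ |Z ω|}
  have hA : ∀ j, NullMeasurableSet (A j) P := fun j =>
    nullMeasurableSet_le aemeasurable_const hZ.1.aemeasurable.abs
  have hpt : ∀ ω, ∑' j, (A j).indicator (fun _ => (4 : ℝ≥0∞) ^ j) ω ≤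
      ENNReal.ofReal (2 / c ^ 2 * Z ω ^ 2) := fun ω => by
    refine ENNReal.tsum_le_of_sum_range_le fun n => ?_
    rw [← sq_abs (Z ω)]
    refine Eq.trans_le ?_ (ENNReal.ofReal_le_ofReal (sum_range_ite_le_four_pow_le hc |Z ω| n))
    rw [ENNReal.ofReal_sum_of_nonneg fun j _ => by positivity]
    refine sum_congr rfl fun j _ => ?_
    simp only [A, Set.indicator_apply, Set.mem_ofPred_eq]
    split_ifs <;> simp
  refine (lt_of_le_of_lt ?_ ((hZ.integrable_sq.const_mul (2 / c ^ 2)).lintegral_lt_top)).ne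
  calc ∑' j, 4 ^ j * P (A j)
      = ∑' j, ∫⁻ ω, (A j).indicator (fun _ => (4 : ℝ≥0∞) ^ j) ω ∂P := by
        simp only [lintegral_indicator_const₀ (hA _)]
    _ = ∫⁻ ω, ∑' j, (A j).indicator (fun _ => (4 : ℝ≥0∞) ^ j) ω ∂P :=
        (lintegral_tsum fun j => aemeasurable_const.indicator₀ (hA j)).symm
    _ ≤ ∫⁻ ω, ENNReal.ofReal (2 / c ^ 2 * Z ω ^ 2) ∂P := lintegral_mono hpt

end IdenticallyDistributed

section Array

variable {Ω : Type*} {Y : ℕ → ℕ → Ω → ℝ}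

/-- Avoiding this event controls `|∑ j ∈ range n, Y i j|` for all `2 ^ j ≤ n < 2 ^ (j + 1)` and
all rows `i < n`. -/
abbrev dyadicExceed (Y : ℕ → ℕ → Ω → ℝ) (ε : ℝ) (j : ℕ) : Set Ω :=
  ⋃ i ∈ range (2 ^ (j + 1)), partialSumsExceed (Y i) (ε * 2 ^ j) (2 ^ (j + 1))

lemma eventually_forall_abs_sum_lt_of_eventually_notMem_dyadicExceed {ε : ℝ} (hε : 0 < ε)
    {ω : Ω} (h : ∀ᶠ j in atTop, ω ∉ dyadicExceed Y ε j) :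
    ∀ᶠ n in atTop, ∀ i < n, |∑ j ∈ range n, Y i j ω| < ε * n := by
  obtain ⟨J, hJ⟩ := eventually_atTop.1 h
  refine eventually_atTop.2 ⟨2 ^ J, fun n hn i hi => ?_⟩
  have hn0 : n ≠ 0 := ((Nat.two_pow_pos J).trans_le hn).ne'
  have hlo : 2 ^ Nat.log 2 n ≤ n := Nat.pow_log_le_self 2 hn0
  have hhi : n < 2 ^ (Nat.log 2 n + 1) := Nat.lt_pow_succ_log_self one_lt_two n
  have hgood := hJ (Nat.log 2 n) (Nat.le_log_of_pow_le one_lt_two hn)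
  simp only [dyadicExceed, Set.mem_iUnion, partialSumsExceed, Set.mem_ofPred_eq, not_exists,
    not_and, not_le] at hgood
  calc |∑ j ∈ range n, Y i j ω| < ε * 2 ^ Nat.log 2 n :=
        hgood i (mem_range.2 (hi.trans hhi)) n hhi.le
    _ ≤ ε * n := by gcongr; exact_mod_cast hlo

variable [MeasurableSpace Ω] {P : Measure Ω}

lemma measure_dyadicExceed_le [IsProbabilityMeasure P] {Z : Ω → ℝ}
    (hY : ∀ i j, Measurable (Y i j)) (hindep : ∀ i, iIndepFun (Y i) P)
    (hident : ∀ i j, IdentDistrib (Y i j) Z P P) (hZ : MemLp Z 2 P) (hZ0 : P[Z] = 0)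
    {ε : ℝ} (hε : 0 < ε) (j : ℕ) :
    P (dyadicExceed Y ε j) ≤ 4 * (4 ^ j * P {ω | ε / 3 * 2 ^ j ≤ |Z ω|}) +
      ENNReal.ofReal (2 * (1296 * variance Z P / ε ^ 2) ^ 2 * (1 / 2) ^ j) := by
  have hv0 := variance_nonneg Z P
  have hrow : ∀ i, P (partialSumsExceed (Y i) (ε * 2 ^ j) (2 ^ (j + 1))) ≤
      (2 ^ (j + 1) : ℕ) * P {ω | ε / 3 * 2 ^ j ≤ |Z ω|} +
        ENNReal.ofReal (72 * (2 ^ (j + 1) : ℕ) * variance Z P / (ε / 3 * 2 ^ j) ^ 2) ^ 2 := by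
    intro i
    convert measure_partialSumsExceed_le_of_identDistrib (hindep i) (hY i) (hident i) hZ hZ0
      (2 ^ (j + 1)) (by positivity : 0 < ε / 3 * 2 ^ j) using 3
    ring
  have hcount : ((2 ^ (j + 1) : ℕ) : ℝ≥0∞) * (2 ^ (j + 1) : ℕ) = 4 * 4 ^ j := by
    push_cast
    rw [← mul_pow, pow_succ']
    norm_num
  have hgeom : ((2 ^ (j + 1) : ℕ) : ℝ≥0∞) *
      ENNReal.ofReal (72 * (2 ^ (j + 1) : ℕ) * variance Z P / (ε / 3 * 2 ^ j) ^ 2) ^ 2 =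
        ENNReal.ofReal (2 * (1296 * variance Z P / ε ^ 2) ^ 2 * (1 / 2) ^ j) := by
    rw [← ENNReal.ofReal_pow (by positivity), ← ENNReal.ofReal_natCast,
      ← ENNReal.ofReal_mul (by positivity)]
    congr 1
    push_cast
    rw [one_div_pow]
    field_simp
    ring
  calc P (dyadicExceed Y ε j)
      ≤ ∑ i ∈ range (2 ^ (j + 1)), P (partialSumsExceed (Y i) (ε * 2 ^ j) (2 ^ (j + 1))) :=
        measure_biUnion_finset_le _ _
    _ ≤ ∑ i ∈ range (2 ^ (j + 1)), ((2 ^ (j + 1) : ℕ) * P {ω | ε / 3 * 2 ^ j ≤ |Z ω|} +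
        ENNReal.ofReal (72 * (2 ^ (j + 1) : ℕ) * variance Z P / (ε / 3 * 2 ^ j) ^ 2) ^ 2) :=
        sum_le_sum fun i _ => hrow i
    _ = _ := by
      rw [sum_const, card_range, nsmul_eq_mul, mul_add, ← mul_assoc, hcount, hgeom, mul_assoc]

lemma tsum_measure_dyadicExceed_ne_top [IsProbabilityMeasure P] {Z : Ω → ℝ}
    (hY : ∀ i j, Measurable (Y i j)) (hindep : ∀ i, iIndepFun (Y i) P)
    (hident : ∀ i j, IdentDistrib (Y i j) Z P P) (hZ : MemLp Z 2 P) (hZ0 : P[Z] = 0)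
    {ε : ℝ} (hε : 0 < ε) : ∑' j, P (dyadicExceed Y ε j) ≠ ∞ := by
  refine ne_top_of_le_ne_top ?_
    (ENNReal.tsum_le_tsum (measure_dyadicExceed_le hY hindep hident hZ hZ0 hε))
  rw [ENNReal.tsum_add, ENNReal.tsum_mul_left, ← ENNReal.ofReal_tsum_of_nonneg
    (fun j => by positivity) ((summable_geometric_two).mul_left _)]
  exact ENNReal.add_ne_top.2 ⟨ENNReal.mul_ne_top (by simp)
    (tsum_four_pow_mul_measure_le_abs_ne_top hZ (by positivity)), ENNReal.ofReal_ne_top⟩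

theorem ae_eventually_forall_abs_sum_lt [IsProbabilityMeasure P] {Z : Ω → ℝ}
    (hY : ∀ i j, Measurable (Y i j)) (hindep : ∀ i, iIndepFun (Y i) P)
    (hident : ∀ i j, IdentDistrib (Y i j) Z P P) (hZ : MemLp Z 2 P) (hZ0 : P[Z] = 0) :
    ∀ᵐ ω ∂P, ∀ ε > 0, ∀ᶠ n in atTop, ∀ i < n, |∑ j ∈ range n, Y i j ω| < ε * n := by
  have hq : ∀ q : ℕ, ∀ᵐ ω ∂P, ∀ᶠ n in atTop, ∀ i < n,
      |∑ j ∈ range n, Y i j ω| < 1 / (q + 1) * n := fun q =>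
    (ae_eventually_notMem (tsum_measure_dyadicExceed_ne_top hY hindep hident hZ hZ0
      Nat.one_div_pos_of_nat)).mono fun ω =>
        eventually_forall_abs_sum_lt_of_eventually_notMem_dyadicExceed Nat.one_div_pos_of_nat
  filter_upwards [ae_all_iff.2 hq] with ω hω ε hε
  obtain ⟨q, hqε⟩ := exists_nat_one_div_lt hε
  exact (hω q).mono fun n hn i hi => (hn i hi).trans_le (by gcongr)

end Array

lemma exists_pos_forall_abs_sub_lt_imp_abs_one_div_sub_lt {m : ℝ} (hm : m ≠ 0) {ε : ℝ}
    (hε : 0 < ε) : ∃ δ > 0, ∀ x, |x - m| < δ → x ≠ 0 ∧ |1 / x - 1 / m| < ε := by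
  obtain ⟨δ, hδ, h⟩ := Metric.continuousAt_iff.1 (continuousAt_inv₀ hm) ε hε
  refine ⟨min δ |m|, lt_min hδ (abs_pos.2 hm), fun x hx => ⟨?_, ?_⟩⟩
  · rintro rfl
    simp at hx
  · simpa [Real.dist_eq] using h (hx.trans_le (min_le_left _ _))

lemma abs_sum_div_sub_lt_of_abs_sum_sub_lt {x : ℕ → ℝ} {m δ : ℝ} {n : ℕ} (hn : 0 < n)
    (h : |∑ j ∈ range n, (x j - m)| < δ * n) : |(∑ j ∈ range n, x j) / n - m| < δ := by
  have hn' : (0 : ℝ) < n := by exact_mod_cast hn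
  rw [sum_sub_distrib, sum_const, card_range, nsmul_eq_mul] at h
  rw [div_sub' hn'.ne', abs_div, abs_of_pos hn', div_lt_iff₀ hn']
  linarith [abs_sub_comm (∑ j ∈ range n, x j) (n * m), mul_comm m (n : ℝ)]

/-- uniform law of large numbers for inverses: if `(X_{i,j})` is an i.i.d.
array of real random variables with mean `m ≠ 0` and finite variance, and
`S_{i,n} = X_{i,1}+⋯+X_{i,n}`, then almost surely `max_{1≤i≤n} |n/S_{i,n} - 1/m| → 0` as
`n → ∞`; in particular, almost surely, for all large `n` all the sums `S_{1,n},…,S_{n,n}`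
are nonzero. -/
theorem uniform_lln_inverse
    {Ω : Type*} [MeasurableSpace Ω] (P : Measure Ω) [IsProbabilityMeasure P]
    (X : ℕ → ℕ → Ω → ℝ) (hmeas : ∀ i j, Measurable (X i j))
    (hindep : iIndepFun (fun (p : ℕ × ℕ) ω => X p.1 p.2 ω) P)
    (hident : ∀ i j, P.map (X i j) = P.map (X 0 0))
    (hL2 : MemLp (X 0 0) 2 P)
    (m : ℝ) (hm : ∫ ω, X 0 0 ω ∂P = m) (hm0 : m ≠ 0) :
    ∀ᵐ ω ∂P, ∀ ε > (0 : ℝ), ∃ N : ℕ, ∀ n ≥ N, ∀ i < n,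
      (∑ j ∈ Finset.range n, X i j ω) ≠ 0 ∧
      |(n : ℝ) / (∑ j ∈ Finset.range n, X i j ω) - 1 / m| < ε := by
  have hrow : ∀ i, iIndepFun (fun j ω => X i j ω - m) P := fun i =>
    (hindep.precomp (g := fun j => (i, j)) fun _ _ h => (Prod.ext_iff.1 h).2).comp
      (fun _ x => x - m) fun _ => measurable_sub_const m
  have hcentered : ∀ i j, IdentDistrib (fun ω => X i j ω - m) (fun ω => X 0 0 ω - m) P P :=
    fun i j => IdentDistrib.comp ⟨(hmeas i j).aemeasurable, (hmeas 0 0).aemeasurable, hident i j⟩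
      (measurable_sub_const m)
  have hmean : P[fun ω => X 0 0 ω - m] = 0 := by
    rw [integral_sub (hL2.integrable one_le_two) (integrable_const m), hm]
    simp
  filter_upwards [ae_eventually_forall_abs_sum_lt (fun i j => (hmeas i j).sub_const m) hrow
    hcentered (hL2.sub (memLp_const m)) hmean] with ω hω ε hε
  obtain ⟨δ, hδ, hinv⟩ := exists_pos_forall_abs_sub_lt_imp_abs_one_div_sub_lt hm0 hε
  obtain ⟨N, hN⟩ := (hω δ hδ).exists_forall_of_atTop
  refine ⟨N, fun n hn i hi => ?_⟩
  obtain ⟨hne, hlt⟩ := hinv _ (abs_sum_div_sub_lt_of_abs_sum_sub_lt (i.zero_le.trans_lt hi)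
    (hN n hn i hi))
  rw [one_div_div] at hlt
  exact ⟨(div_ne_zero_iff.1 hne).1, hlt⟩
end

section
/- Let (X_{i,j})_{i,j≥1} be an infinite array of i.i.d. exponential random variables of rate 1, and set S_{i,n} = X_{i,1}+⋯+X_{i,n}. Then almost surely, (1/n)∑_{i=1}^n log(n/S_{i,n}) → 0 as n → ∞. Equivalently, if D^{(n)} is the n×n diagonal matrix with entries D^{(n)}_{i,i} = 1/S_{i,n}, then almost surely (1/n)·log|det(n·D^{(n)})| → 0. -/
/-!
Chernoff's bound with the moment generating function `1 / (1 - t)` of `Exp(1)` gives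
`P(|S_{i,n} - n| ≥ δ n) ≤ 2 exp (-n δ² / 8)` for each row. A union bound over the `n` rows
costs a factor `n`, which keeps the bound summable in `n`, so by Borel–Cantelli almost surely
`|S_{i,n} / n - 1| < δ` holds for all rows `i < n` once `n` is large. Then every term
`log (n / S_{i,n})` is at most `2 δ` in absolute value, and so is their average.
-/

open MeasureTheory ProbabilityTheory Filter Topology
open Real Finset

lemma toReal_exponentialPDF_smul_exp {r : ℝ} (hr : 0 ≤ r) (t x : ℝ) :
    (exponentialPDF r x).toReal • exp (t * x)
      = (Set.Ici 0).indicator (fun x => r * exp ((t - r) * x)) x := by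
  rw [exponentialPDF_eq, smul_eq_mul]
  by_cases hx : 0 ≤ x
  · rw [if_pos hx, Set.indicator_of_mem (Set.mem_Ici.2 hx), ENNReal.toReal_ofReal (by positivity),
      mul_assoc, ← exp_add]
    ring_nf
  · rw [if_neg hx, Set.indicator_of_notMem (by simpa using hx), ENNReal.ofReal_zero,
      ENNReal.toReal_zero, zero_mul]

lemma expMeasure_eq_withDensity (r : ℝ) :
    expMeasure r = volume.withDensity (exponentialPDF r) := rfl

lemma measurable_exponentialPDF (r : ℝ) : Measurable (exponentialPDF r) :=
  (measurable_exponentialPDFReal r).ennreal_ofReal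

lemma integrable_exp_mul_expMeasure {r t : ℝ} (hr : 0 ≤ r) (ht : t < r) :
    Integrable (fun x => exp (t * x)) (expMeasure r) := by
  rw [expMeasure_eq_withDensity, integrable_withDensity_iff_integrable_smul'
    (measurable_exponentialPDF r) (ae_of_all _ fun _ => ENNReal.ofReal_lt_top)]
  simp_rw [toReal_exponentialPDF_smul_exp hr]
  rw [integrable_indicator_iff measurableSet_Ici, integrableOn_Ici_iff_integrableOn_Ioi]
  exact (integrableOn_exp_mul_Ioi (by linarith) 0).const_mul r

lemma integral_exp_mul_expMeasure {r t : ℝ} (hr : 0 ≤ r) (ht : t < r) :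
    ∫ x, exp (t * x) ∂expMeasure r = r / (r - t) := by
  rw [expMeasure_eq_withDensity, integral_withDensity_eq_integral_toReal_smul
    (measurable_exponentialPDF r) (ae_of_all _ fun _ => ENNReal.ofReal_lt_top)]
  simp_rw [toReal_exponentialPDF_smul_exp hr, integral_indicator measurableSet_Ici,
    integral_Ici_eq_integral_Ioi, integral_const_mul, integral_exp_mul_Ioi (sub_neg.2 ht)]
  rw [mul_zero, exp_zero, ← neg_sub r t, div_neg]
  ring

lemma mgf_id_expMeasure {r t : ℝ} (hr : 0 ≤ r) (ht : t < r) :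
    mgf id (expMeasure r) t = r / (r - t) :=
  integral_exp_mul_expMeasure hr ht

lemma inv_one_sub_le_exp {y : ℝ} (hy : |y| ≤ 1 / 2) : (1 - y)⁻¹ ≤ exp (y + 2 * y ^ 2) := by
  obtain ⟨hy₁, hy₂⟩ := abs_le.1 hy
  have hpos : 0 < 1 - y := by linarith
  calc (1 - y)⁻¹ ≤ 1 + y + 2 * y ^ 2 := by
        rw [inv_le_iff_one_le_mul₀ hpos]
        nlinarith [sq_nonneg y]
    _ ≤ exp (y + 2 * y ^ 2) := by linarith [add_one_le_exp (y + 2 * y ^ 2)]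

lemma abs_log_le_of_abs_sub_one_lt {x δ : ℝ} (hδ : δ ≤ 1 / 2) (hx : |x - 1| < δ) :
    |log x| ≤ 2 * δ := by
  obtain ⟨hx₁, hx₂⟩ := abs_lt.1 hx
  have hxpos : 0 < x := by linarith
  rw [abs_le]
  constructor
  · have hinv : x⁻¹ - 1 ≤ 2 * δ := by
      rw [inv_eq_one_div, div_sub_one hxpos.ne', div_le_iff₀ hxpos]
      nlinarith
    linarith [log_inv x ▸ log_le_sub_one_of_pos (inv_pos.2 hxpos)]
  · linarith [log_le_sub_one_of_pos hxpos]

lemma abs_log_div_le_of_abs_sub_lt {n T δ : ℝ} (hn : 0 < n) (hδ : δ ≤ 1 / 2)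
    (hT : |T - n| < n * δ) : |log (n / T)| ≤ 2 * δ := by
  rw [← inv_div, log_inv, abs_neg]
  refine abs_log_le_of_abs_sub_one_lt hδ ?_
  rwa [← div_self hn.ne', ← sub_div, abs_div, abs_of_pos hn, div_lt_iff₀' hn]

lemma abs_one_div_mul_sum_le {f : ℕ → ℝ} {c : ℝ} {n : ℕ} (hc : 0 ≤ c)
    (hf : ∀ i < n, |f i| ≤ c) : |1 / (n : ℝ) * ∑ i ∈ Finset.range n, f i| ≤ c := by
  rcases n.eq_zero_or_pos with rfl | hn
  · simpa using hc
  rw [abs_mul, abs_of_pos (by positivity), one_div_mul_eq_div, div_le_iff₀' (by positivity)]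
  calc |∑ i ∈ Finset.range n, f i| ≤ ∑ i ∈ Finset.range n, |f i| := abs_sum_le_sum_abs _ _
    _ ≤ ∑ _i ∈ Finset.range n, c := Finset.sum_le_sum fun i hi => hf i (Finset.mem_range.1 hi)
    _ = n * c := by rw [Finset.sum_const, Finset.card_range, nsmul_eq_mul]

lemma tendsto_zero_of_forall_eventually_abs_le {α : Type*} {l : Filter α} {u : α → ℝ}
    {ε : ℕ → ℝ} (hε : Tendsto ε atTop (𝓝 0)) (h : ∀ k, ∀ᶠ a in l, |u a| ≤ ε k) :
    Tendsto u l (𝓝 0) := by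
  rw [Metric.tendsto_nhds]
  intro e he
  obtain ⟨k, hk⟩ := (hε.eventually (gt_mem_nhds he)).exists
  filter_upwards [h k] with a ha
  rw [Real.dist_0_eq_abs]
  exact ha.trans_lt hk

section ExponentialArray

variable {Ω ι : Type*} [MeasurableSpace Ω] {P : Measure Ω} {r t δ : ℝ}

lemma integrable_exp_mul_of_map_eq_expMeasure {Y : Ω → ℝ} (hY : AEMeasurable Y P)
    (hlaw : P.map Y = expMeasure r) (hr : 0 ≤ r) (ht : t < r) :
    Integrable (fun ω => exp (t * Y ω)) P := by
  have h := integrable_exp_mul_expMeasure hr ht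
  rw [← hlaw] at h
  exact h.comp_aemeasurable hY

lemma mgf_of_map_eq_expMeasure {Y : Ω → ℝ} (hY : AEMeasurable Y P)
    (hlaw : P.map Y = expMeasure r) (hr : 0 ≤ r) (ht : t < r) :
    mgf Y P t = r / (r - t) := by
  rw [← mgf_id_map hY, hlaw, mgf_id_expMeasure hr ht]

lemma exp_neg_mul_mgf_sum_le {Y : ι → Ω → ℝ} (hmeas : ∀ j, Measurable (Y j))
    (hind : iIndepFun Y P) (hlaw : ∀ j, P.map (Y j) = expMeasure 1) (ht : |t| ≤ 1 / 2)
    (s : Finset ι) (ε : ℝ) :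
    exp (-t * ε) * mgf (∑ j ∈ s, Y j) P t ≤ exp (-t * ε + #s * (t + 2 * t ^ 2)) := by
  have ht₁ : t < 1 := by linarith [(abs_le.1 ht).2]
  rw [hind.mgf_sum hmeas, Finset.prod_congr rfl fun j _ =>
    mgf_of_map_eq_expMeasure (hmeas j).aemeasurable (hlaw j) zero_le_one ht₁, Finset.prod_const,
    exp_add, exp_nat_mul, one_div]
  gcongr
  exact inv_one_sub_le_exp ht

lemma measureReal_sum_ge_le {Y : ι → Ω → ℝ} (hmeas : ∀ j, Measurable (Y j))
    (hind : iIndepFun Y P) (hlaw : ∀ j, P.map (Y j) = expMeasure 1) (hδ₀ : 0 ≤ δ)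
    (hδ₂ : δ ≤ 2) (s : Finset ι) :
    P.real {ω | #s * (1 + δ) ≤ ∑ j ∈ s, Y j ω} ≤ exp (-#s * (δ ^ 2 / 8)) := by
  have : IsProbabilityMeasure P := hind.isProbabilityMeasure
  have ht : |δ / 4| ≤ 1 / 2 := by rw [abs_of_nonneg (by positivity)]; linarith
  have hint := hind.integrable_exp_mul_sum hmeas (s := s) fun j _ =>
    integrable_exp_mul_of_map_eq_expMeasure (hmeas j).aemeasurable (hlaw j) zero_le_one
      (t := δ / 4) (by linarith)
  calc P.real {ω | #s * (1 + δ) ≤ ∑ j ∈ s, Y j ω}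
      ≤ exp (-(δ / 4) * (#s * (1 + δ))) * mgf (∑ j ∈ s, Y j) P (δ / 4) := by
        simpa only [Finset.sum_apply] using measure_ge_le_exp_mul_mgf _ (by positivity) hint
    _ ≤ exp (-(δ / 4) * (#s * (1 + δ)) + #s * (δ / 4 + 2 * (δ / 4) ^ 2)) :=
        exp_neg_mul_mgf_sum_le hmeas hind hlaw ht s _
    _ = exp (-#s * (δ ^ 2 / 8)) := by ring_nf

lemma measureReal_sum_le_le {Y : ι → Ω → ℝ} (hmeas : ∀ j, Measurable (Y j))
    (hind : iIndepFun Y P) (hlaw : ∀ j, P.map (Y j) = expMeasure 1) (hδ₀ : 0 ≤ δ)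
    (hδ₂ : δ ≤ 2) (s : Finset ι) :
    P.real {ω | ∑ j ∈ s, Y j ω ≤ #s * (1 - δ)} ≤ exp (-#s * (δ ^ 2 / 8)) := by
  have : IsProbabilityMeasure P := hind.isProbabilityMeasure
  have ht : |-(δ / 4)| ≤ 1 / 2 := by rw [abs_neg, abs_of_nonneg (by positivity)]; linarith
  have hint := hind.integrable_exp_mul_sum hmeas (s := s) fun j _ =>
    integrable_exp_mul_of_map_eq_expMeasure (hmeas j).aemeasurable (hlaw j) zero_le_one
      (t := -(δ / 4)) (by linarith)
  calc P.real {ω | ∑ j ∈ s, Y j ω ≤ #s * (1 - δ)}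
      ≤ exp (-(-(δ / 4)) * (#s * (1 - δ))) * mgf (∑ j ∈ s, Y j) P (-(δ / 4)) := by
        simpa only [Finset.sum_apply] using
          measure_le_le_exp_mul_mgf _ (by linarith) hint
    _ ≤ exp (-(-(δ / 4)) * (#s * (1 - δ)) + #s * (-(δ / 4) + 2 * (-(δ / 4)) ^ 2)) :=
        exp_neg_mul_mgf_sum_le hmeas hind hlaw ht s _
    _ = exp (-#s * (δ ^ 2 / 8)) := by ring_nf

lemma measureReal_abs_sum_sub_card_ge_le {Y : ι → Ω → ℝ} (hmeas : ∀ j, Measurable (Y j))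
    (hind : iIndepFun Y P) (hlaw : ∀ j, P.map (Y j) = expMeasure 1) (hδ₀ : 0 ≤ δ)
    (hδ₂ : δ ≤ 2) (s : Finset ι) :
    P.real {ω | #s * δ ≤ |∑ j ∈ s, Y j ω - #s|} ≤ 2 * exp (-#s * (δ ^ 2 / 8)) := by
  have : IsProbabilityMeasure P := hind.isProbabilityMeasure
  have hsub : {ω | #s * δ ≤ |∑ j ∈ s, Y j ω - #s|} ⊆
      {ω | #s * (1 + δ) ≤ ∑ j ∈ s, Y j ω} ∪ {ω | ∑ j ∈ s, Y j ω ≤ #s * (1 - δ)} := by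
    intro ω (hω : (_ : ℝ) ≤ _)
    rcases le_abs'.1 hω with h | h
    · exact Or.inr (show (_ : ℝ) ≤ _ by linarith)
    · exact Or.inl (show (_ : ℝ) ≤ _ by linarith)
  calc _ ≤ _ := measureReal_mono hsub
    _ ≤ _ := measureReal_union_le _ _
    _ ≤ _ := add_le_add (measureReal_sum_ge_le hmeas hind hlaw hδ₀ hδ₂ s)
        (measureReal_sum_le_le hmeas hind hlaw hδ₀ hδ₂ s)
    _ = _ := (two_mul _).symm

lemma ae_eventually_forall_abs_rowSum_sub_lt {X : ℕ → ℕ → Ω → ℝ}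
    (hmeas : ∀ i j, Measurable (X i j)) (hrow : ∀ i, iIndepFun (X i) P)
    (hlaw : ∀ i j, P.map (X i j) = expMeasure 1) (hδ₀ : 0 < δ) (hδ₂ : δ ≤ 2) :
    ∀ᵐ ω ∂P, ∀ᶠ n in atTop, ∀ i < n, |∑ j ∈ Finset.range n, X i j ω - n| < n * δ := by
  have : IsProbabilityMeasure P := (hrow 0).isProbabilityMeasure
  set A : ℕ → Set Ω := fun n =>
    ⋃ i ∈ Finset.range n, {ω | n * δ ≤ |∑ j ∈ Finset.range n, X i j ω - n|}
  have hA : ∀ n, P.real (A n) ≤ 2 * (n ^ 1 * exp (-(δ ^ 2 / 8) * n)) := fun n => calc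
    P.real (A n) ≤ ∑ i ∈ Finset.range n, 2 * exp (-n * (δ ^ 2 / 8)) := by
        refine (measureReal_biUnion_finset_le _ _).trans (Finset.sum_le_sum fun i _ => ?_)
        simpa using measureReal_abs_sum_sub_card_ge_le (hmeas i) (hrow i) (hlaw i) hδ₀.le hδ₂
          (Finset.range n)
    _ = 2 * (n ^ 1 * exp (-(δ ^ 2 / 8) * n)) := by
        rw [Finset.sum_const, Finset.card_range, nsmul_eq_mul]
        ring_nf
  have hsum : Summable fun n : ℕ => 2 * (n ^ 1 * exp (-(δ ^ 2 / 8) * n)) :=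
    (summable_pow_mul_exp_neg_nat_mul 1 (by positivity)).mul_left 2
  have htsum : ∑' n, P (A n) ≠ ⊤ := by
    refine ne_top_of_le_ne_top hsum.tsum_ofReal_ne_top (ENNReal.tsum_le_tsum fun n => ?_)
    rw [← ofReal_measureReal (measure_ne_top P _)]
    exact ENNReal.ofReal_le_ofReal (hA n)
  filter_upwards [ae_eventually_notMem htsum] with ω hω
  filter_upwards [hω] with n hn i hi
  simp only [A, Set.mem_iUnion, Set.mem_ofPred_eq, Finset.mem_range, not_exists, not_le] at hn
  exact hn i hi

lemma ae_eventually_abs_avg_log_le {X : ℕ → ℕ → Ω → ℝ}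
    (hmeas : ∀ i j, Measurable (X i j)) (hrow : ∀ i, iIndepFun (X i) P)
    (hlaw : ∀ i j, P.map (X i j) = expMeasure 1) {ε : ℝ} (hε₀ : 0 < ε) (hε₁ : ε ≤ 1) :
    ∀ᵐ ω ∂P, ∀ᶠ n : ℕ in atTop,
      |1 / (n : ℝ) * ∑ i ∈ Finset.range n, log (n / ∑ j ∈ Finset.range n, X i j ω)| ≤ ε := by
  filter_upwards [ae_eventually_forall_abs_rowSum_sub_lt hmeas hrow hlaw (half_pos hε₀)
    (by linarith)] with ω hω
  filter_upwards [hω, eventually_gt_atTop 0] with n hn hn₀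
  refine abs_one_div_mul_sum_le hε₀.le fun i hi => ?_
  exact (abs_log_div_le_of_abs_sub_lt (by positivity) (by linarith) (hn i hi)).trans_eq
    (mul_div_cancel₀ ε two_ne_zero)

end ExponentialArray

theorem avg_log_n_div_rowSum_tendsto_zero_general
    {Ω : Type*} [MeasurableSpace Ω] (P : Measure Ω)
    (X : ℕ → ℕ → Ω → ℝ) (hmeas : ∀ i j, Measurable (X i j))
    (hindep : iIndepFun (fun (p : ℕ × ℕ) ω => X p.1 p.2 ω) P)
    (hlaw : ∀ i j, P.map (X i j) = expMeasure 1) :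
    ∀ᵐ ω ∂P,
      Tendsto (fun n : ℕ =>
          (1 / (n : ℝ)) * ∑ i ∈ Finset.range n,
            Real.log ((n : ℝ) / ∑ j ∈ Finset.range n, X i j ω))
        atTop (𝓝 0) := by
  have hrow : ∀ i, iIndepFun (X i) P := fun i =>
    hindep.precomp (g := fun j => (i, j)) fun _ _ h => (Prod.mk.inj h).2
  have hbound : ∀ k : ℕ, ∀ᵐ ω ∂P, ∀ᶠ n : ℕ in atTop,
      |1 / (n : ℝ) * ∑ i ∈ Finset.range n, log (n / ∑ j ∈ Finset.range n, X i j ω)|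
        ≤ 1 / ((k : ℝ) + 1) := fun k =>
    ae_eventually_abs_avg_log_le hmeas hrow hlaw (by positivity)
      (div_le_one_of_le₀ (by linarith [k.cast_nonneg (α := ℝ)]) (by positivity))
  filter_upwards [ae_all_iff.2 hbound] with ω hω
  exact tendsto_zero_of_forall_eventually_abs_le tendsto_one_div_add_atTop_nhds_zero_nat hω

/-- let `(X_{i,j})` be an i.i.d. array of exponential rate-1 random variables
and `S_{i,n} = X_{i,1}+⋯+X_{i,n}`. Then almost surely
`(1/n) ∑_{i=1}^n log(n/S_{i,n}) → 0` as `n → ∞`; i.e. if `D⁽ⁿ⁾` is the diagonal matrix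
with entries `1/S_{i,n}`, then almost surely `(1/n)·log|det(n·D⁽ⁿ⁾)| → 0`. -/
theorem avg_log_n_div_rowSum_tendsto_zero
    {Ω : Type*} [MeasurableSpace Ω] (P : Measure Ω) [IsProbabilityMeasure P]
    (X : ℕ → ℕ → Ω → ℝ) (hmeas : ∀ i j, Measurable (X i j))
    (hindep : iIndepFun (fun (p : ℕ × ℕ) ω => X p.1 p.2 ω) P)
    (hlaw : ∀ i j, P.map (X i j) = expMeasure 1) :
    ∀ᵐ ω ∂P,
      Tendsto (fun n : ℕ =>
          (1 / (n : ℝ)) * ∑ i ∈ Finset.range n,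
            Real.log ((n : ℝ) / ∑ j ∈ Finset.range n, X i j ω))
        atTop (𝓝 0) :=
  avg_log_n_div_rowSum_tendsto_zero_general P X hmeas hindep hlaw
end
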